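/- The process {x_n} is a stochastic approximation process with driving function F = P: one has E(x_{n+1} − x_n | F_n) = (2m/S_{n+1}) P(x_n), and writing x_{n+1} − x_n = (1/n)(P(x_n) + ξ_{n+1} + R_n) with ξ_{n+1} = n(x_{n+1} − x_n − E(x_{n+1} − x_n | F_n)) and R_n = −((S_0 + 2m)/(S_0 + 2m(n+1))) P(x_n), the noise terms satisfy E(ξ_{n+1} | F_n) = 0 and |ξ_n| ≤ 2 for all n ≥ 1, and the F_n-measurable remainder terms satisfy Σ_{n≥1} n^{-1}|R_n| < ∞ almost surely. -/

import Mathlib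

open MeasureTheory ProbabilityTheory Filter Set

noncomputable section

/-- The polynomial `P(z) = (1/2) ∑_{k=0}^m C(m,k) z^k (1-z)^{m-k} (p_k - k/m)`. -/
def polyP (m : ℕ) (p : ℕ → ℝ) (z : ℝ) : ℝ :=
  (1 / 2) * ∑ k ∈ Finset.range (m + 1),
    (m.choose k : ℝ) * z ^ k * (1 - z) ^ (m - k) * (p k - (k : ℝ) / m)

/-- The zero set `Z_P = {z ∈ [0,1] : P(z) = 0}`. -/
def zeroSetP (m : ℕ) (p : ℕ → ℝ) : Set ℝ :=
  {z ∈ Set.Icc (0 : ℝ) 1 | polyP m p z = 0}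

/-- The two-type preferential attachment process with `m` edges per new node and type
adoption parameters `p 0, …, p m`, defined on a probability space `(Ω, μ)` with filtration
`F`.  `A n` is the number of red nodes and `X n` the sum of the degrees of red nodes at time
`n`; the transition probabilities given `F n` are those of the model: a number `k` of red
neighbours is drawn from the `Binomial(m, x_n)` distribution, and then the new node is red
with probability `p k` (adding `1` to the red nodes and `k + m` to the red degrees) and blue
with probability `1 - p k` (adding `k` to the red degrees). -/
structure PAProcess (Ω : Type) [MeasurableSpace Ω] where
  μ : Measure Ω
  isProb : IsProbabilityMeasure μ
  m : ℕ
  hm : 1 ≤ m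
  p : ℕ → ℝ
  hp : ∀ k ≤ m, p k ∈ Set.Icc (0 : ℝ) 1
  A : ℕ → Ω → ℕ
  X : ℕ → Ω → ℕ
  F : Filtration ℕ ‹MeasurableSpace Ω›
  A0 : ℕ
  B0 : ℕ
  X0 : ℕ
  Y0 : ℕ
  hA0 : ∀ ω, A 0 ω = A0
  hX0 : ∀ ω, X 0 ω = X0
  adaptedA : ∀ n, Measurable[F n] (A n)
  adaptedX : ∀ n, Measurable[F n] (X n)
  hXle : ∀ n ω, X n ω ≤ X0 + Y0 + 2 * m * n
  step_red : ∀ n, ∀ k ≤ m,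
    μ[Set.indicator {ω | A (n + 1) ω = A n ω + 1 ∧ X (n + 1) ω = X n ω + k + m}
        (fun _ => (1 : ℝ)) | F n]
      =ᵐ[μ] fun ω => (m.choose k : ℝ) *
        ((X n ω : ℝ) / ((X0 : ℝ) + Y0 + 2 * m * n)) ^ k *
        (1 - (X n ω : ℝ) / ((X0 : ℝ) + Y0 + 2 * m * n)) ^ (m - k) * p k
  step_blue : ∀ n, ∀ k ≤ m,
    μ[Set.indicator {ω | A (n + 1) ω = A n ω ∧ X (n + 1) ω = X n ω + k}
        (fun _ => (1 : ℝ)) | F n]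
      =ᵐ[μ] fun ω => (m.choose k : ℝ) *
        ((X n ω : ℝ) / ((X0 : ℝ) + Y0 + 2 * m * n)) ^ k *
        (1 - (X n ω : ℝ) / ((X0 : ℝ) + Y0 + 2 * m * n)) ^ (m - k) * (1 - p k)

namespace PAProcess

variable {Ω : Type} [MeasurableSpace Ω] (P : PAProcess Ω)

/-- Total degree `S_n = S_0 + 2mn`. -/
def S (n : ℕ) : ℕ := P.X0 + P.Y0 + 2 * P.m * n

/-- Normalized red degree `x_n = X_n / S_n`. -/
def x (n : ℕ) (ω : Ω) : ℝ := (P.X n ω : ℝ) / (P.S n : ℝ)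

/-- Normalized red node count `a_n = A_n / (A_0 + B_0 + n)`. -/
def a (n : ℕ) (ω : Ω) : ℝ := (P.A n ω : ℝ) / ((P.A0 : ℝ) + P.B0 + n)

/-- The polynomial `P` of the process. -/
def poly : ℝ → ℝ := polyP P.m P.p

/-- The zero set `Z_P` of the process. -/
def Zp : Set ℝ := zeroSetP P.m P.p

end PAProcess

namespace PAProcess

variable {Ω : Type} [MeasurableSpace Ω] (P : PAProcess Ω)

/-- The noise term `ξ_{n+1} = n (x_{n+1} − x_n − E(x_{n+1} − x_n | F_n))`
(so `P.xi n` is `ξ_{n+1}`). -/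
def xi (n : ℕ) : Ω → ℝ :=
  fun ω => (n : ℝ) * (P.x (n + 1) ω - P.x n ω -
    (P.μ[fun ω' => P.x (n + 1) ω' - P.x n ω' | P.F n]) ω)

/-- The remainder term `R_n = −((S_0 + 2m)/(S_0 + 2m(n+1))) P(x_n)`. -/
def Rrem (n : ℕ) : Ω → ℝ :=
  fun ω => -(((P.S 0 : ℝ) + 2 * P.m) / ((P.S 0 : ℝ) + 2 * P.m * (n + 1))) * P.poly (P.x n ω)

end PAProcess

/-!
Given `F_n`, the outcomes "the new node has `k` red neighbours and is red (resp. blue)" are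
disjoint events whose conditional probabilities `C(m,k) x_n^k (1-x_n)^(m-k) p_k` (resp. with
`1 - p_k`) sum to one, so almost surely one of them occurs; on it `X_{n+1} - X_n` is `k + m`
(resp. `k`). Hence `E(X_{n+1} - X_n | F_n)` is the binomial mean `m x_n + m ∑ C(m,k) … p_k`,
which is `2m x_n + 2m P(x_n)`, and dividing by `S_{n+1} = S_n + 2m` gives the drift of `x_n`.
The noise is bounded because the jumps are at most `2m` while `S_{n+1} ≥ 2m(n+1)`, and
`R_n = O(1/n)` because `|P| ≤ 1/2` on `[0,1]`.
-/

lemma sum_range_choose_mul_pow_mul_pow (m : ℕ) (z : ℝ) :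
    ∑ k ∈ Finset.range (m + 1), (m.choose k : ℝ) * z ^ k * (1 - z) ^ (m - k) = 1 := by
  simpa [bernsteinPolynomial, Polynomial.eval_finsetSum] using
    congrArg (Polynomial.eval z) (bernsteinPolynomial.sum ℝ m)

lemma sum_range_choose_mul_pow_mul_pow_mul_self (m : ℕ) (z : ℝ) :
    ∑ k ∈ Finset.range (m + 1), (m.choose k : ℝ) * z ^ k * (1 - z) ^ (m - k) * k = m * z := by
  have := congrArg (Polynomial.eval z) (bernsteinPolynomial.sum_smul (R := ℝ) m)
  simp only [Polynomial.eval_finsetSum, bernsteinPolynomial,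
    Polynomial.eval_mul, Polynomial.eval_pow, Polynomial.eval_natCast, Polynomial.eval_X,
    Polynomial.eval_sub, Polynomial.eval_one, nsmul_eq_mul] at this
  rw [← this]
  exact Finset.sum_congr rfl fun k _ => by ring

lemma two_mul_polyP {m : ℕ} (hm : m ≠ 0) (p : ℕ → ℝ) (z : ℝ) :
    2 * polyP m p z
      = ∑ k ∈ Finset.range (m + 1), (m.choose k : ℝ) * z ^ k * (1 - z) ^ (m - k) * p k - z := by
  have hmean : ∑ k ∈ Finset.range (m + 1),
      (m.choose k : ℝ) * z ^ k * (1 - z) ^ (m - k) * ((k : ℝ) / m) = z := by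
    simp_rw [← mul_div_assoc, ← Finset.sum_div, sum_range_choose_mul_pow_mul_pow_mul_self]
    exact mul_div_cancel_left₀ z (Nat.cast_ne_zero.2 hm)
  simp only [polyP, mul_sub, Finset.sum_sub_distrib, hmean]
  ring

lemma abs_polyP_le {m : ℕ} {p : ℕ → ℝ} (hp : ∀ k ≤ m, p k ∈ Icc (0 : ℝ) 1) {z : ℝ}
    (hz : z ∈ Icc (0 : ℝ) 1) : |polyP m p z| ≤ 1 / 2 := by
  have hterm : ∀ k ∈ Finset.range (m + 1),
      |(m.choose k : ℝ) * z ^ k * (1 - z) ^ (m - k) * (p k - k / m)|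
        ≤ (m.choose k : ℝ) * z ^ k * (1 - z) ^ (m - k) := by
    intro k hk
    have hkm : k ≤ m := Nat.lt_succ_iff.1 (Finset.mem_range.1 hk)
    have hweight : 0 ≤ (m.choose k : ℝ) * z ^ k * (1 - z) ^ (m - k) :=
      mul_nonneg (mul_nonneg (by positivity) (pow_nonneg hz.1 _)) (pow_nonneg (sub_nonneg.2 hz.2) _)
    have hratio : (k : ℝ) / m ∈ Icc (0 : ℝ) 1 :=
      ⟨by positivity, div_le_one_of_le₀ (by exact_mod_cast hkm) (by positivity)⟩
    rw [abs_mul, abs_of_nonneg hweight]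
    refine mul_le_of_le_one_right hweight (abs_le.2 ⟨?_, ?_⟩) <;>
      linarith [(hp k hkm).1, (hp k hkm).2, hratio.1, hratio.2]
  calc |polyP m p z|
      ≤ 1 / 2 * ∑ k ∈ Finset.range (m + 1), (m.choose k : ℝ) * z ^ k * (1 - z) ^ (m - k) := by
        rw [polyP, abs_mul, abs_of_pos one_half_pos]
        gcongr
        exact (Finset.abs_sum_le_sum_abs _ _).trans (Finset.sum_le_sum hterm)
    _ = 1 / 2 := by rw [sum_range_choose_mul_pow_mul_pow, mul_one]

lemma continuous_polyP (m : ℕ) (p : ℕ → ℝ) : Continuous (polyP m p) := by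
  unfold polyP
  fun_prop

section PartitionCondExp

variable {Ω ι : Type*} {m m₀ : MeasurableSpace Ω} {μ : Measure Ω}

lemma condExp_sub_condExp_ae_eq_zero {E : Type*} [NormedAddCommGroup E] [NormedSpace ℝ E]
    [CompleteSpace E] (hm : m ≤ m₀) [SigmaFinite (μ.trim hm)] {f : Ω → E}
    (hf : Integrable f μ) : μ[f - μ[f | m] | m] =ᵐ[μ] 0 := by
  have hidem : μ[μ[f | m] | m] = μ[f | m] :=
    condExp_of_stronglyMeasurable hm stronglyMeasurable_condExp integrable_condExp
  filter_upwards [condExp_sub hf (integrable_condExp (m := m) (f := f)) m] with ω hω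
  simp [hω, hidem]

variable [IsProbabilityMeasure μ] {s : Finset ι} {t : ι → Set Ω}

lemma ae_exists_mem_of_sum_condExp_indicator_ae_eq_one (hm : m ≤ m₀)
    (ht : ∀ i ∈ s, MeasurableSet (t i)) (hd : (s : Set ι).PairwiseDisjoint t)
    (hsum : ∑ i ∈ s, μ[(t i).indicator (1 : Ω → ℝ) | m] =ᵐ[μ] 1) :
    ∀ᵐ ω ∂μ, ∃ i ∈ s, ω ∈ t i := by
  have hU : MeasurableSet (⋃ i ∈ s, t i) := Finset.measurableSet_biUnion s ht
  have hreal : μ.real (⋃ i ∈ s, t i) = 1 := by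
    calc μ.real (⋃ i ∈ s, t i) = ∑ i ∈ s, μ.real (t i) := measureReal_biUnion_finset hd ht
      _ = ∑ i ∈ s, ∫ ω, μ[(t i).indicator (1 : Ω → ℝ) | m] ω ∂μ := by
        refine Finset.sum_congr rfl fun i hi => ?_
        rw [integral_condExp hm, integral_indicator_one (ht i hi)]
      _ = ∫ ω, (∑ i ∈ s, μ[(t i).indicator (1 : Ω → ℝ) | m]) ω ∂μ := by
        simp only [Finset.sum_apply]
        exact (integral_finsetSum s fun i _ => integrable_condExp).symm
      _ = 1 := by rw [integral_congr_ae hsum]; simp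
  have hprob : μ (⋃ i ∈ s, t i) = 1 := by
    rwa [measureReal_def, ENNReal.toReal_eq_one_iff] at hreal
  filter_upwards [(mem_ae_iff_prob_eq_one hU).2 hprob] with ω hω
  simpa using hω

lemma condExp_ae_eq_sum_smul_condExp_indicator (hm : m ≤ m₀)
    (ht : ∀ i ∈ s, MeasurableSet (t i)) (hd : (s : Set ι).PairwiseDisjoint t)
    (hsum : ∑ i ∈ s, μ[(t i).indicator (1 : Ω → ℝ) | m] =ᵐ[μ] 1) {f : Ω → ℝ} {c : ι → ℝ}
    (hf : ∀ i ∈ s, ∀ ω ∈ t i, f ω = c i) :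
    μ[f | m] =ᵐ[μ] ∑ i ∈ s, c i • μ[(t i).indicator (1 : Ω → ℝ) | m] := by
  have hf_ae : f =ᵐ[μ] ∑ i ∈ s, c i • (t i).indicator 1 := by
    filter_upwards [ae_exists_mem_of_sum_condExp_indicator_ae_eq_one hm ht hd hsum]
      with ω ⟨i, hi, hω⟩
    rw [hf i hi ω hω, Finset.sum_apply, Finset.sum_eq_single_of_mem i hi]
    · simp [hω]
    · intro j hj hji
      simp [indicator_of_notMem ((hd hj hi hji).notMem_of_mem_right hω)]
  have hint : ∀ i ∈ s, Integrable (c i • (t i).indicator (1 : Ω → ℝ)) μ :=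
    fun i hi => ((integrable_const 1).indicator (ht i hi)).smul (c i)
  exact (condExp_congr_ae hf_ae).trans <| (condExp_finsetSum hint m).trans <|
    eventuallyEq_sum fun i _ => condExp_smul (c i) _ m

end PartitionCondExp

namespace PAProcess

variable {Ω : Type} [MeasurableSpace Ω] (P : PAProcess Ω)

instance : IsProbabilityMeasure P.μ := P.isProb

lemma S_cast (n : ℕ) : (P.S n : ℝ) = P.X0 + P.Y0 + 2 * P.m * n := by
  simp [S]

lemma S_succ_cast (n : ℕ) : (P.S (n + 1) : ℝ) = P.S n + 2 * P.m := by
  rw [S_cast, S_cast]; push_cast; ring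

lemma S_succ_pos (n : ℕ) : 0 < (P.S (n + 1) : ℝ) := by
  have := P.hm
  rw [S_cast]; positivity

lemma two_mul_m_mul_le_S (n : ℕ) : 2 * (P.m : ℝ) * n ≤ P.S n := by
  rw [S_cast]; exact le_add_of_nonneg_left (by positivity)

lemma x_mem_Icc (n : ℕ) (ω : Ω) : P.x n ω ∈ Icc (0 : ℝ) 1 :=
  ⟨by unfold x; positivity, div_le_one_of_le₀ (by exact_mod_cast P.hXle n ω) (by positivity)⟩

lemma X_eq_x_mul_S (n : ℕ) (ω : Ω) : (P.X n ω : ℝ) = P.x n ω * P.S n := by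
  rcases eq_or_ne (P.S n : ℝ) 0 with h | h
  · have hX : P.X n ω ≤ P.S n := P.hXle n ω
    rw [h, mul_zero]
    exact_mod_cast Nat.le_zero.1 (hX.trans (by exact_mod_cast h.le))
  · rw [x, div_mul_cancel₀ _ h]

lemma x_succ_sub_x (n : ℕ) (ω : Ω) :
    P.x (n + 1) ω - P.x n ω
      = ((P.X (n + 1) ω : ℝ) - P.X n ω - 2 * P.m * P.x n ω) / P.S (n + 1) := by
  rw [eq_div_iff (P.S_succ_pos n).ne', X_eq_x_mul_S, X_eq_x_mul_S, S_succ_cast]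
  ring

lemma measurable_A (n : ℕ) : Measurable (P.A n) := (P.adaptedA n).mono (P.F.le n) le_rfl

lemma measurable_X (n : ℕ) : Measurable (P.X n) := (P.adaptedX n).mono (P.F.le n) le_rfl

lemma measurable_x (n : ℕ) : Measurable[P.F n] (P.x n) :=
  (measurable_from_top.comp (P.adaptedX n)).div_const _

lemma integrable_x (n : ℕ) : Integrable (P.x n) P.μ :=
  .of_bound ((P.measurable_x n).mono (P.F.le n) le_rfl).aestronglyMeasurable 1
    (ae_of_all _ fun ω => by
      rw [Real.norm_eq_abs, abs_of_nonneg (P.x_mem_Icc n ω).1]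
      exact (P.x_mem_Icc n ω).2)

def outcomes : Finset (ℕ × Bool) := Finset.range (P.m + 1) ×ˢ Finset.univ

/-- The outcome `(k, b)` of step `n`: the new node has `k` red neighbours and is red iff `b`. -/
def stepEvent (n : ℕ) : ℕ × Bool → Set Ω
  | (k, true) => {ω | P.A (n + 1) ω = P.A n ω + 1 ∧ P.X (n + 1) ω = P.X n ω + k + P.m}
  | (k, false) => {ω | P.A (n + 1) ω = P.A n ω ∧ P.X (n + 1) ω = P.X n ω + k}

def jump : ℕ × Bool → ℕ
  | (k, b) => k + cond b P.m 0

def stepProb (n : ℕ) : ℕ × Bool → Ω → ℝ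
  | (k, b), ω => (P.m.choose k : ℝ) * P.x n ω ^ k * (1 - P.x n ω) ^ (P.m - k) *
      cond b (P.p k) (1 - P.p k)

lemma fst_le_of_mem_outcomes {i : ℕ × Bool} (hi : i ∈ P.outcomes) : i.1 ≤ P.m :=
  Nat.lt_succ_iff.1 (Finset.mem_range.1 (Finset.mem_product.1 hi).1)

lemma jump_le {i : ℕ × Bool} (hi : i ∈ P.outcomes) : P.jump i ≤ 2 * P.m := by
  have hk := P.fst_le_of_mem_outcomes hi
  obtain ⟨k, _ | _⟩ := i <;> simp only [jump, cond_true, cond_false] at hk ⊢ <;> omega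

lemma sum_outcomes (f : ℕ × Bool → ℝ) :
    ∑ i ∈ P.outcomes, f i = ∑ k ∈ Finset.range (P.m + 1), (f (k, true) + f (k, false)) := by
  simp [outcomes, Finset.sum_product]

lemma X_succ_eq_of_mem_stepEvent {n : ℕ} {i : ℕ × Bool} {ω : Ω} (h : ω ∈ P.stepEvent n i) :
    P.X (n + 1) ω = P.X n ω + P.jump i := by
  rcases i with ⟨k, _ | _⟩ <;>
    simp only [stepEvent, jump, mem_ofPred_eq, cond_true, cond_false] at h ⊢ <;> omega

lemma measurableSet_stepEvent (n : ℕ) (i : ℕ × Bool) : MeasurableSet (P.stepEvent n i) := by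
  rcases i with ⟨k, _ | _⟩
  · exact (measurableSet_eq_fun (P.measurable_A _) (P.measurable_A n)).inter
      (measurableSet_eq_fun (P.measurable_X _) ((P.measurable_X n).add_const k))
  · exact (measurableSet_eq_fun (P.measurable_A _) ((P.measurable_A n).add_const 1)).inter
      (measurableSet_eq_fun (P.measurable_X _) (((P.measurable_X n).add_const k).add_const P.m))

lemma pairwise_disjoint_stepEvent (n : ℕ) :
    Pairwise (Function.onFun Disjoint (P.stepEvent n)) := by
  rintro ⟨k, b⟩ ⟨k', b'⟩ hne
  refine Set.disjoint_left.2 fun ω h h' => hne ?_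
  cases b <;> cases b' <;> simp only [stepEvent, mem_ofPred_eq] at h h' <;>
    first | omega | (congr 1; omega)

lemma condExp_indicator_stepEvent (n : ℕ) {i : ℕ × Bool} (hi : i ∈ P.outcomes) :
    P.μ[(P.stepEvent n i).indicator (1 : Ω → ℝ) | P.F n] =ᵐ[P.μ] P.stepProb n i := by
  have hk := P.fst_le_of_mem_outcomes hi
  have hx : ∀ ω, P.x n ω = P.X n ω / ((P.X0 : ℝ) + P.Y0 + 2 * P.m * n) := fun ω => by
    rw [x, S_cast]
  rcases i with ⟨k, _ | _⟩
  · exact (P.step_blue n k hk).trans (ae_of_all _ fun ω => by simp [stepProb, hx])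
  · exact (P.step_red n k hk).trans (ae_of_all _ fun ω => by simp [stepProb, hx])

lemma sum_stepProb (n : ℕ) (ω : Ω) : ∑ i ∈ P.outcomes, P.stepProb n i ω = 1 := by
  rw [sum_outcomes, ← sum_range_choose_mul_pow_mul_pow P.m (P.x n ω)]
  refine Finset.sum_congr rfl fun k _ => ?_
  simp only [stepProb, cond_true, cond_false]
  ring

lemma sum_jump_mul_stepProb (n : ℕ) (ω : Ω) :
    ∑ i ∈ P.outcomes, (P.jump i : ℝ) * P.stepProb n i ω
      = 2 * P.m * P.x n ω + 2 * P.m * P.poly (P.x n ω) := by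
  set w : ℕ → ℝ := fun k => (P.m.choose k : ℝ) * P.x n ω ^ k * (1 - P.x n ω) ^ (P.m - k)
  have hpoly := two_mul_polyP (Nat.one_le_iff_ne_zero.1 P.hm) P.p (P.x n ω)
  have hmean := sum_range_choose_mul_pow_mul_pow_mul_self P.m (P.x n ω)
  calc ∑ i ∈ P.outcomes, (P.jump i : ℝ) * P.stepProb n i ω
      = ∑ k ∈ Finset.range (P.m + 1), (w k * k + P.m * (w k * P.p k)) := by
        rw [sum_outcomes]
        refine Finset.sum_congr rfl fun k _ => ?_
        simp only [stepProb, jump, cond_true, cond_false, w]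
        push_cast
        ring
    _ = 2 * P.m * P.x n ω + 2 * P.m * P.poly (P.x n ω) := by
        rw [Finset.sum_add_distrib, ← Finset.mul_sum, poly]
        linear_combination hmean - (P.m : ℝ) * hpoly

lemma sum_condExp_indicator_stepEvent (n : ℕ) :
    ∑ i ∈ P.outcomes, P.μ[(P.stepEvent n i).indicator (1 : Ω → ℝ) | P.F n] =ᵐ[P.μ] 1 :=
  (eventuallyEq_sum fun _ hi => P.condExp_indicator_stepEvent n hi).trans
    (ae_of_all _ fun ω => by simp [Finset.sum_apply, sum_stepProb])

lemma ae_exists_mem_stepEvent (n : ℕ) :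
    ∀ᵐ ω ∂P.μ, ∃ i ∈ P.outcomes, ω ∈ P.stepEvent n i :=
  ae_exists_mem_of_sum_condExp_indicator_ae_eq_one (P.F.le n)
    (fun i _ => P.measurableSet_stepEvent n i) ((P.pairwise_disjoint_stepEvent n).set_pairwise _)
    (P.sum_condExp_indicator_stepEvent n)

lemma ae_X_succ_sub_X_mem_Icc (n : ℕ) :
    ∀ᵐ ω ∂P.μ, (P.X (n + 1) ω : ℝ) - P.X n ω ∈ Icc (0 : ℝ) (2 * P.m) := by
  filter_upwards [P.ae_exists_mem_stepEvent n] with ω ⟨i, hi, hω⟩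
  rw [P.X_succ_eq_of_mem_stepEvent hω, Nat.cast_add, add_sub_cancel_left]
  exact ⟨by positivity, by exact_mod_cast P.jump_le hi⟩

lemma condExp_X_succ_sub_X (n : ℕ) :
    P.μ[fun ω => (P.X (n + 1) ω : ℝ) - P.X n ω | P.F n]
      =ᵐ[P.μ] fun ω => 2 * P.m * P.x n ω + 2 * P.m * P.poly (P.x n ω) := by
  refine (condExp_ae_eq_sum_smul_condExp_indicator (P.F.le n)
    (fun i _ => P.measurableSet_stepEvent n i) ((P.pairwise_disjoint_stepEvent n).set_pairwise _)
    (P.sum_condExp_indicator_stepEvent n) (c := fun i => (P.jump i : ℝ))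
    fun i _ ω hω => ?_).trans ?_
  · rw [P.X_succ_eq_of_mem_stepEvent hω, Nat.cast_add, add_sub_cancel_left]
  · filter_upwards [(eventually_all_finset _).2 fun _ hi => P.condExp_indicator_stepEvent n hi]
      with ω hω
    simp only [← sum_jump_mul_stepProb, Finset.sum_apply, Pi.smul_apply, smul_eq_mul]
    exact Finset.sum_congr rfl fun i hi => by rw [hω i hi]

lemma integrable_X_succ_sub_X (n : ℕ) :
    Integrable (fun ω => (P.X (n + 1) ω : ℝ) - P.X n ω) P.μ := by
  have hX : ∀ j, Measurable fun ω => (P.X j ω : ℝ) := fun j =>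
    measurable_from_top.comp (P.measurable_X j)
  refine .of_bound ((hX _).sub (hX n)).aestronglyMeasurable (2 * P.m) ?_
  filter_upwards [P.ae_X_succ_sub_X_mem_Icc n] with ω hω
  rw [Real.norm_eq_abs, abs_of_nonneg hω.1]
  exact hω.2

lemma condExp_x_succ_sub_x (n : ℕ) :
    P.μ[fun ω => P.x (n + 1) ω - P.x n ω | P.F n]
      =ᵐ[P.μ] fun ω => (2 * (P.m : ℝ) / (P.S (n + 1) : ℝ)) * P.poly (P.x n ω) := by
  have hfun : (fun ω => P.x (n + 1) ω - P.x n ω) = (P.S (n + 1) : ℝ)⁻¹ •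
      ((fun ω => (P.X (n + 1) ω : ℝ) - P.X n ω) - (2 * P.m : ℝ) • P.x n) := by
    funext ω
    simp only [x_succ_sub_x, Pi.smul_apply, Pi.sub_apply, smul_eq_mul]
    ring
  have hx_cond : P.μ[(2 * P.m : ℝ) • P.x n | P.F n] = (2 * P.m : ℝ) • P.x n :=
    condExp_of_stronglyMeasurable (P.F.le n) ((P.measurable_x n).stronglyMeasurable.const_smul _)
      ((P.integrable_x n).smul _)
  rw [hfun]
  filter_upwards [condExp_smul (μ := P.μ) (P.S (n + 1) : ℝ)⁻¹
      ((fun ω => (P.X (n + 1) ω : ℝ) - P.X n ω) - (2 * P.m : ℝ) • P.x n) (P.F n),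
    condExp_sub (P.integrable_X_succ_sub_X n) ((P.integrable_x n).smul (2 * P.m : ℝ)) (P.F n),
    P.condExp_X_succ_sub_X n] with ω h1 h2 h3
  rw [h1, Pi.smul_apply, h2, Pi.sub_apply, hx_cond, h3, Pi.smul_apply, smul_eq_mul, smul_eq_mul]
  ring

lemma ae_abs_x_succ_sub_x_le (n : ℕ) :
    ∀ᵐ ω ∂P.μ, |P.x (n + 1) ω - P.x n ω| ≤ 2 * P.m / P.S (n + 1) := by
  filter_upwards [P.ae_X_succ_sub_X_mem_Icc n] with ω hω
  have hx := P.x_mem_Icc n ω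
  rw [x_succ_sub_x, abs_div, abs_of_pos (P.S_succ_pos n)]
  gcongr
  rw [abs_le]
  constructor <;> nlinarith [hω.1, hω.2, hx.1, hx.2]

lemma ae_x_succ_sub_x_eq (n : ℕ) (hn : n ≠ 0) :
    ∀ᵐ ω ∂P.μ, P.x (n + 1) ω - P.x n ω
      = (1 / (n : ℝ)) * (P.poly (P.x n ω) + P.xi n ω + P.Rrem n ω) := by
  filter_upwards [P.condExp_x_succ_sub_x n] with ω hω
  have hnum : (P.S 0 : ℝ) + 2 * P.m = P.S (n + 1) - 2 * P.m * n := by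
    rw [S_cast, S_cast]; push_cast; ring
  have hden : (P.S 0 : ℝ) + 2 * P.m * (n + 1) = P.S (n + 1) := by
    rw [S_cast, S_cast]; push_cast; ring
  have hn' : (n : ℝ) ≠ 0 := Nat.cast_ne_zero.2 hn
  have hSpos := P.S_succ_pos n
  rw [xi, Rrem, hω, hnum, hden]
  field_simp
  ring

lemma condExp_xi (n : ℕ) : P.μ[P.xi n | P.F n] =ᵐ[P.μ] 0 := by
  have hxi : P.xi n = (n : ℝ) • ((fun ω => P.x (n + 1) ω - P.x n ω)
      - P.μ[fun ω => P.x (n + 1) ω - P.x n ω | P.F n]) := rfl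
  filter_upwards [hxi ▸ condExp_smul (n : ℝ) _ (P.F n),
    condExp_sub_condExp_ae_eq_zero (P.F.le n) (f := fun ω => P.x (n + 1) ω - P.x n ω)
      ((P.integrable_x (n + 1)).sub (P.integrable_x n))] with ω h1 h2
  rw [h1, Pi.smul_apply, h2]
  simp

lemma ae_abs_xi_le (n : ℕ) : ∀ᵐ ω ∂P.μ, |P.xi n ω| ≤ 2 := by
  filter_upwards [P.condExp_x_succ_sub_x n, P.ae_abs_x_succ_sub_x_le n] with ω hE hΔ
  have hpoly : |P.poly (P.x n ω)| ≤ 1 / 2 := abs_polyP_le P.hp (P.x_mem_Icc n ω)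
  have hS := P.two_mul_m_mul_le_S (n + 1)
  have hSpos := P.S_succ_pos n
  have hm : (0 : ℝ) ≤ P.m := by positivity
  calc |P.xi n ω|
      ≤ n * (2 * P.m / P.S (n + 1) + 2 * P.m / P.S (n + 1) * (1 / 2)) := by
        rw [xi, hE, abs_mul, Nat.abs_cast]
        gcongr
        refine (abs_sub _ _).trans (add_le_add hΔ ?_)
        rw [abs_mul, abs_of_nonneg (by positivity)]
        gcongr
    _ = 3 * (P.m * n) / P.S (n + 1) := by ring
    _ ≤ 2 := by
        rw [div_le_iff₀ hSpos]
        push_cast at hS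
        nlinarith [mul_nonneg hm (Nat.cast_nonneg (α := ℝ) n)]

lemma stronglyMeasurable_Rrem (n : ℕ) : StronglyMeasurable[P.F n] (P.Rrem n) :=
  (measurable_const.mul
    ((continuous_polyP P.m P.p).measurable.comp (P.measurable_x n))).stronglyMeasurable

lemma abs_Rrem_le (n : ℕ) (ω : Ω) : |P.Rrem n ω| ≤ (P.S 0 + 2 * P.m) / (n + 1) := by
  have hpoly : |P.poly (P.x n ω)| ≤ 1 / 2 := abs_polyP_le P.hp (P.x_mem_Icc n ω)
  have hm : (1 : ℝ) ≤ P.m := by exact_mod_cast P.hm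
  have hD : (n : ℝ) + 1 ≤ P.S 0 + 2 * P.m * (n + 1) := by nlinarith [(P.S 0).cast_nonneg (α := ℝ)]
  rw [Rrem, abs_mul, abs_neg, abs_of_nonneg (by positivity)]
  calc (P.S 0 + 2 * P.m) / (P.S 0 + 2 * P.m * (n + 1)) * |P.poly (P.x n ω)|
      ≤ (P.S 0 + 2 * P.m) / (n + 1) * 1 := by gcongr; linarith
    _ = _ := mul_one _

lemma summable_abs_Rrem_succ_div (ω : Ω) :
    Summable fun n : ℕ => |P.Rrem (n + 1) ω| / ((n : ℝ) + 1) := by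
  have hinvsq : Summable fun n : ℕ => 1 / ((n : ℝ) + 1) ^ 2 := by
    simpa using (summable_nat_add_iff 1).2 (Real.summable_one_div_nat_pow.2 one_lt_two)
  refine .of_nonneg_of_le (fun n => by positivity) (fun n => ?_)
    (hinvsq.mul_left ((P.S 0 : ℝ) + 2 * P.m))
  calc |P.Rrem (n + 1) ω| / ((n : ℝ) + 1)
      ≤ (P.S 0 + 2 * P.m) / ((n + 1 : ℕ) + 1) / ((n : ℝ) + 1) := by
        gcongr; exact P.abs_Rrem_le (n + 1) ω
    _ ≤ (P.S 0 + 2 * P.m) / ((n : ℝ) + 1) / ((n : ℝ) + 1) := by gcongr; linarith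
    _ = (P.S 0 + 2 * P.m) * (1 / ((n : ℝ) + 1) ^ 2) := by
        rw [div_div, ← sq, mul_one_div]

end PAProcess

/-- **Stochastic approximation.** The process `{x_n}` is a stochastic approximation process
with driving function `F = P`: one has `E(x_{n+1} − x_n | F_n) = (2m/S_{n+1}) P(x_n)`;
writing `x_{n+1} − x_n = (1/n)(P(x_n) + ξ_{n+1} + R_n)` with
`ξ_{n+1} = n (x_{n+1} − x_n − E(x_{n+1} − x_n | F_n))` and
`R_n = −((S_0 + 2m)/(S_0 + 2m(n+1))) P(x_n)`, the noise terms satisfy `E(ξ_{n+1} | F_n) = 0`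
and `|ξ_n| ≤ 2` for all `n ≥ 1`, and the `F_n`-measurable remainder terms satisfy
`∑_{n≥1} n⁻¹ |R_n| < ∞` almost surely. -/
theorem x_is_stochastic_approximation
    {Ω : Type} [MeasurableSpace Ω] (P : PAProcess Ω) :
    (∀ n : ℕ,
      P.μ[fun ω => P.x (n + 1) ω - P.x n ω | P.F n]
        =ᵐ[P.μ] fun ω => (2 * (P.m : ℝ) / (P.S (n + 1) : ℝ)) * P.poly (P.x n ω)) ∧
    (∀ n : ℕ, 1 ≤ n → ∀ᵐ ω ∂P.μ,
      P.x (n + 1) ω - P.x n ω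
        = (1 / (n : ℝ)) * (P.poly (P.x n ω) + P.xi n ω + P.Rrem n ω)) ∧
    (∀ n : ℕ, P.μ[P.xi n | P.F n] =ᵐ[P.μ] 0) ∧
    (∀ n : ℕ, ∀ᵐ ω ∂P.μ, |P.xi n ω| ≤ 2) ∧
    (∀ n : ℕ, StronglyMeasurable[P.F n] (P.Rrem n)) ∧
    (∀ᵐ ω ∂P.μ, Summable fun n : ℕ => |P.Rrem (n + 1) ω| / ((n : ℝ) + 1)) :=
  ⟨P.condExp_x_succ_sub_x, fun n hn => P.ae_x_succ_sub_x_eq n (Nat.one_le_iff_ne_zero.1 hn),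
    P.condExp_xi, P.ae_abs_xi_le, P.stronglyMeasurable_Rrem,
    ae_of_all _ P.summable_abs_Rrem_succ_div⟩
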